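/- (Coefficient identity underlying Corollary 1.8) Suppose there is a ≥ 1 such that c(I) = a for every nonempty I ⊆ {1,…,r}. Then for every s ≥ 1, the coefficient of t^{n+a−s} in χ_c(S)(t) − t^n equals Σ_{∅≠I⊆{1,…,r}, |σ_I|=s} (−1)^{|I|}, which in turn equals the coefficient of x^s in Σ_{F} x^{|F|}(1−x)^{n−|F|}, the sum ranging over all subsets F ⊆ {1,…,n} containing no σ_i (i.e. this coefficient is the entry h_s of the h-vector of S computed with normalization (1−x)^n). -/

import Mathlib

open Finset LaurentPolynomial

noncomputable section

/-- The union `σ_I = ⋃_{i ∈ I} σ_i`. -/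
def unionOver {ι V : Type*} [DecidableEq V] (σ : ι → Finset V) (I : Finset ι) : Finset V :=
  I.sup σ

/-- The intersection graph `G_I` on the vertex set `I`. -/
def interGraph {ι V : Type*} [DecidableEq V] (σ : ι → Finset V) (I : Finset ι) :
    SimpleGraph {i // i ∈ I} where
  Adj i j := i ≠ j ∧ (σ i.1 ∩ σ j.1).Nonempty
  symm := by
    refine ⟨?_⟩
    intro i j h
    exact ⟨h.1.symm, by rw [Finset.inter_comm]; exact h.2⟩
  loopless := by refine ⟨?_⟩; intro i h; exact h.1 rfl

/-- `c(I)`, the number of connected components of `G_I`. -/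
def compCount {ι V : Type*} [DecidableEq V] (σ : ι → Finset V) (I : Finset ι) : ℕ :=
  Nat.card (interGraph σ I).ConnectedComponent

/-- Property I. -/
def PropertyI {ι V W : Type*} [DecidableEq V] [DecidableEq W]
    (σ : ι → Finset V) (α : ι → Finset W) : Prop :=
  (∀ i, (α i).card + 1 = (σ i).card) ∧
  ∀ I : Finset ι, I.Nonempty → ∀ p ∉ I,
    (unionOver σ I ∩ σ p = ∅ → unionOver α I ∩ α p = ∅) ∧
    ((unionOver σ I ∩ σ p).Nonempty →
      (unionOver α I ∩ α p).card + 1 = (unionOver σ I ∩ σ p).card)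

/-- The simplicial chromatic polynomial. -/
def simpChrom {ι : Type*} [Fintype ι] [DecidableEq ι] {n : ℕ} (σ : ι → Finset (Fin n)) :
    LaurentPolynomial ℤ :=
  T (n : ℤ) +
  ∑ I ∈ (univ : Finset ι).powerset.filter (fun I => I.Nonempty),
    (-1) ^ I.card *
      T ((n : ℤ) - ((unionOver σ I).card : ℤ) + (compCount σ I : ℤ))

/-- Faces of the complex whose minimal nonfaces are the `α i`. -/
def facesOf {ι : Type*} [Fintype ι] {N : ℕ} (α : ι → Finset (Fin N)) :
    Finset (Finset (Fin N)) :=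
  (univ : Finset (Finset (Fin N))).filter (fun F => ∀ i, ¬ α i ⊆ F)

/-- Coefficient of `t^k` in a Laurent polynomial. -/
def lcoeff (p : LaurentPolynomial ℤ) (k : ℤ) : ℤ := p.coeff k

end

/-!
Once `c(I) = a` for all `I ≠ ∅`, the `I`-th term of `χ_c(S) − t^n` is `±t^{n + a − |σ_I|}`, which
gives the first identity. For the second, inclusion–exclusion writes the indicator of "`F` is a
face" as `∑_{I : σ_I ⊆ F} (-1)^{|I|}`; exchanging the sums and using
`∑_{G ⊇ A} x^{|G|} (1 - x)^{n - |G|} = x^{|A|}` yields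
`∑_F x^{|F|} (1 - x)^{n - |F|} = ∑_I (-1)^{|I|} x^{|σ_I|}`, and `s ≥ 1` excludes `I = ∅`.
-/

section Faces

variable {R : Type*} [CommRing R]

theorem sum_superset_pow_mul_one_sub_pow {α : Type*} [Fintype α] [DecidableEq α]
    (x : R) (A : Finset α) :
    ∑ G ∈ univ with A ⊆ G, x ^ #G * (1 - x) ^ (Fintype.card α - #G) = x ^ #A := by
  have hdisj : ∀ t ∈ Aᶜ.powerset, Disjoint A t := fun t ht =>
    disjoint_of_subset_right (mem_powerset.1 ht) disjoint_compl_right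
  have hunion : ∀ G ∈ univ.filter (A ⊆ ·), A ∪ G \ A = G := fun G hG =>
    union_sdiff_of_subset (mem_filter.1 hG).2
  calc _ = ∑ t ∈ Aᶜ.powerset, x ^ #(A ∪ t) * (1 - x) ^ (Fintype.card α - #(A ∪ t)) := by
        refine sum_nbij' (· \ A) (A ∪ ·) (fun G _ => ?_) (fun t _ => ?_) hunion
          (fun t ht => union_sdiff_cancel_left (hdisj t ht)) (fun G hG => by rw [hunion G hG])
        · exact mem_powerset.2 fun v hv => mem_compl.2 (mem_sdiff.1 hv).2
        · exact mem_filter.2 ⟨mem_univ _, subset_union_left⟩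
    _ = ∑ t ∈ Aᶜ.powerset, x ^ #A * (x ^ #t * (1 - x) ^ (#Aᶜ - #t)) := by
        refine sum_congr rfl fun t ht => ?_
        rw [card_union_of_disjoint (hdisj t ht), card_compl, pow_add, mul_assoc, Nat.sub_sub]
    _ = x ^ #A := by rw [← mul_sum, sum_pow_mul_eq_add_pow, add_sub_cancel, one_pow, mul_one]

theorem sum_neg_one_pow_of_unionOver_subset {ι V : Type*} [Fintype ι] [DecidableEq ι]
    [DecidableEq V] (σ : ι → Finset V) (G : Finset V) :
    ∑ I ∈ univ.powerset with unionOver σ I ⊆ G, (-1 : R) ^ #I =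
      if ∀ i, ¬ σ i ⊆ G then 1 else 0 := by
  have hfilter : {I ∈ (univ : Finset ι).powerset | unionOver σ I ⊆ G} =
      (univ.filter (σ · ⊆ G)).powerset := by
    ext I
    simp [unionOver, subset_iff]
  have h := congrArg (Int.cast : ℤ → R)
    (sum_powerset_neg_one_pow_card (x := (univ : Finset ι).filter (σ · ⊆ G)))
  push_cast at h
  rw [hfilter]
  simpa [filter_eq_empty_iff] using h

theorem sum_facesOf_pow_mul_one_sub_pow {ι : Type*} [Fintype ι] [DecidableEq ι] {n : ℕ}
    (σ : ι → Finset (Fin n)) (x : R) :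
    ∑ F ∈ facesOf σ, x ^ #F * (1 - x) ^ (n - #F) =
      ∑ I ∈ univ.powerset, (-1) ^ #I * x ^ #(unionOver σ I) := by
  calc _ = ∑ G, (∑ I ∈ univ.powerset with unionOver σ I ⊆ G, (-1 : R) ^ #I) *
          (x ^ #G * (1 - x) ^ (n - #G)) := by
        rw [facesOf, sum_filter]
        simp_rw [sum_neg_one_pow_of_unionOver_subset, ite_mul, one_mul, zero_mul]
    _ = ∑ I ∈ univ.powerset, (-1) ^ #I *
          ∑ G ∈ univ with unionOver σ I ⊆ G, x ^ #G * (1 - x) ^ (n - #G) := by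
        simp_rw [sum_filter, sum_mul, mul_sum, ite_mul, mul_ite, zero_mul, mul_zero]
        exact sum_comm
    _ = _ := by
        have := sum_superset_pow_mul_one_sub_pow (α := Fin n) x
        simp only [Fintype.card_fin] at this
        simp_rw [this]

end Faces

theorem LaurentPolynomial.coeff_sum_neg_one_pow_mul_T {R β : Type*} [Ring R] (S : Finset β)
    (m : β → ℕ) (e : β → ℤ) (k : ℤ) :
    (∑ b ∈ S, (-1 : R[T;T⁻¹]) ^ m b * T (e b)).coeff k = ∑ b ∈ S with e b = k, (-1) ^ m b := by
  have hterm : ∀ b, (-1 : R[T;T⁻¹]) ^ m b * T (e b) = .single (e b) ((-1) ^ m b) := fun b => by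
    rw [single_eq_C_mul_T, map_pow, map_neg, map_one]
  rw [AddMonoidAlgebra.coeff_sum, Finsupp.finsetSum_apply, sum_filter]
  refine sum_congr rfl fun b _ => ?_
  rw [hterm]
  exact Finsupp.single_apply

theorem Polynomial.coeff_sum_neg_one_pow_mul_X_pow {R β : Type*} [Ring R] (S : Finset β)
    (m : β → ℕ) (e : β → ℕ) (k : ℕ) :
    (∑ b ∈ S, (-1 : Polynomial R) ^ m b * X ^ e b).coeff k = ∑ b ∈ S with e b = k, (-1) ^ m b := by
  rw [finsetSum_coeff, sum_filter]
  refine sum_congr rfl fun b _ => ?_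
  rw [← C_1, ← C_neg, ← C_pow, coeff_C_mul_X_pow]
  exact if_congr eq_comm rfl rfl

theorem nonempty_of_card_unionOver_pos {ι V : Type*} [DecidableEq V] {σ : ι → Finset V}
    {I : Finset ι} (h : 0 < #(unionOver σ I)) : I.Nonempty := by
  contrapose! h
  simp [h, unionOver]

theorem stmt_7_general {n r : ℕ} (σ : Fin r → Finset (Fin n)) (a : ℕ)
    (hc : ∀ I : Finset (Fin r), I.Nonempty → compCount σ I = a)
    (s : ℕ) (hs : 1 ≤ s) :
    (lcoeff (simpChrom σ - T (n : ℤ)) ((n : ℤ) + a - s) =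
      ∑ I ∈ (univ : Finset (Fin r)).powerset.filter
          (fun I => I.Nonempty ∧ (unionOver σ I).card = s), (-1 : ℤ) ^ I.card) ∧
    (∑ I ∈ (univ : Finset (Fin r)).powerset.filter
          (fun I => I.Nonempty ∧ (unionOver σ I).card = s), (-1 : ℤ) ^ I.card) =
      (∑ F ∈ facesOf σ,
          Polynomial.X ^ F.card * (1 - Polynomial.X : Polynomial ℤ) ^ (n - F.card)).coeff s := by
  have hχ : simpChrom σ - T n = ∑ I ∈ univ.powerset with I.Nonempty,
      (-1) ^ #I * T (n - #(unionOver σ I) + a) := by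
    rw [simpChrom, add_sub_cancel_left]
    exact sum_congr rfl fun I hI => by rw [hc I (mem_filter.1 hI).2]
  constructor
  · rw [lcoeff, hχ, coeff_sum_neg_one_pow_mul_T, filter_filter]
    exact sum_congr (filter_congr fun I _ => and_congr_right fun _ => by omega) fun _ _ => rfl
  · rw [sum_facesOf_pow_mul_one_sub_pow, Polynomial.coeff_sum_neg_one_pow_mul_X_pow]
    refine sum_congr (filter_congr fun I _ => ?_) fun _ _ => rfl
    exact ⟨And.right, fun h => ⟨nonempty_of_card_unionOver_pos (hs.trans_eq h.symm), h⟩⟩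

/-- if `c(I) = a ≥ 1` for every nonempty `I`, then for every `s ≥ 1` the
coefficient of `t^{n+a−s}` in `χ_c(S)(t) − t^n` equals
`Σ_{∅≠I⊆[r], |σ_I|=s} (−1)^{|I|}`, which equals the coefficient of `x^s` in
`Σ_F x^{|F|}(1−x)^{n−|F|}` (sum over `F ⊆ [n]` containing no `σ_i`), i.e. the entry `h_s`
of the `h`-vector of `S` with normalization `(1−x)^n`. -/
theorem stmt_7 {n r : ℕ} (σ : Fin r → Finset (Fin n)) (a : ℕ) (ha : 1 ≤ a)
    (hc : ∀ I : Finset (Fin r), I.Nonempty → compCount σ I = a)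
    (s : ℕ) (hs : 1 ≤ s) :
    (lcoeff (simpChrom σ - T (n : ℤ)) ((n : ℤ) + a - s) =
      ∑ I ∈ (univ : Finset (Fin r)).powerset.filter
          (fun I => I.Nonempty ∧ (unionOver σ I).card = s), (-1 : ℤ) ^ I.card) ∧
    (∑ I ∈ (univ : Finset (Fin r)).powerset.filter
          (fun I => I.Nonempty ∧ (unionOver σ I).card = s), (-1 : ℤ) ^ I.card) =
      (∑ F ∈ facesOf σ,
          Polynomial.X ^ F.card * (1 - Polynomial.X : Polynomial ℤ) ^ (n - F.card)).coeff s :=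
  stmt_7_general σ a hc s hs
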